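/- The derivative of a radial polynomial admits the expansion (d/dr) R_m^{|l|}(r) = Σ_{j=0}^{(m-1-|l-1|)/2} (m-2j) R_{m-1-2j}^{|l-1|}(r) + Σ_{j=0}^{(m-1-|l+1|)/2} (m-2j) R_{m-1-2j}^{|l+1|}(r), for all (l,m) with |l| ≤ m and m-|l| even, m ≥ 1. -/

import Mathlib

/-- The radial (Zernike) polynomial `R_m^{|l|}` for admissible index pairs. -/
noncomputable def radialPolyAux (m l : ℕ) (r : ℝ) : ℝ :=
  ∑ j ∈ Finset.range ((m - l) / 2 + 1),
    (-1 : ℝ) ^ j * (Nat.factorial (m - j) : ℝ) /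
      ((Nat.factorial j : ℝ) * (Nat.factorial ((m + l) / 2 - j) : ℝ) *
        (Nat.factorial ((m - l) / 2 - j) : ℝ)) * r ^ (m - 2 * j)

/-- The radial polynomial `R_m^{|l|}` with integer angular index `l`, with the convention
that it vanishes when the index pair `(l,m)` is not admissible. -/
noncomputable def radialPoly (m : ℕ) (l : ℤ) (r : ℝ) : ℝ :=
  if l.natAbs ≤ m ∧ Even (m - l.natAbs) then radialPolyAux m l.natAbs r else 0

/-!
Write `m = p + q` and `l = p - q`. Then `R_m^{|l|}` is
`Z p q = ∑ j, (-1)^j C(p, j) C(p + q - j, p) r^(p + q - 2j)`,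
and `l ∓ 1` shifts only one of `p`, `q`.
Comparing coefficients (Pascal's rule and `C(n, k + 1) (k + 1) = C(n, k) (n - k)`) gives
`Z'(p+1, q+1) = Z'(p, q) + (p + q + 2) (Z(p, q+1) + Z(p+1, q))`, that is
`R'_{m+2}^l = R'_m^l + (m + 2) (R_{m+1}^{l-1} + R_{m+1}^{l+1})`.
Telescoping down to `R_{|l|}^l = r^{|l|}` gives the expansion.
-/

open Finset Nat

/-- Equal to `(-1)^j (p+q-j)! / (j! (p-j)! (q-j)!)` for `j ≤ min p q` and zero beyond, so that
sums over different ranges of `j` can be compared term by term. -/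
noncomputable def zernikeCoeff (p q j : ℕ) : ℝ :=
  (-1) ^ j * p.choose j * (p + q - j).choose p

noncomputable def zernikeRadial (p q : ℕ) (r : ℝ) : ℝ :=
  ∑ j ∈ range (p + 1), zernikeCoeff p q j * r ^ (p + q - 2 * j)

section Coeff

variable {p q j : ℕ}

lemma zernikeCoeff_eq_zero_of_lt_left (h : p < j) : zernikeCoeff p q j = 0 := by
  simp [zernikeCoeff, choose_eq_zero_of_lt h]

lemma zernikeCoeff_eq_zero_of_lt_right (h : q < j) : zernikeCoeff p q j = 0 := by
  rcases lt_or_ge p j with hp | hp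
  · exact zernikeCoeff_eq_zero_of_lt_left hp
  · simp [zernikeCoeff, choose_eq_zero_of_lt (show p + q - j < p by omega)]

lemma zernikeCoeff_eq_factorial (hp : j ≤ p) (hq : j ≤ q) :
    zernikeCoeff p q j = (-1) ^ j * (p + q - j)! / (j ! * (p - j)! * (q - j)!) := by
  rw [zernikeCoeff, cast_choose ℝ hp, cast_choose ℝ (show p ≤ p + q - j by omega),
    show p + q - j - p = q - j by omega]
  field_simp

end Coeff

lemma zernikeCoeff_succ_succ (p q i : ℕ) :
    zernikeCoeff (p + 1) (q + 1) (i + 1) * (p + q - 2 * i : ℕ) =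
      zernikeCoeff p q i * (p + q - 2 * i : ℕ) +
        (p + q + 2) * (zernikeCoeff p (q + 1) (i + 1) + zernikeCoeff (p + 1) q (i + 1)) := by
  rcases lt_or_ge p i with hp | hp
  · simp [zernikeCoeff_eq_zero_of_lt_left, hp, show p < i + 1 by omega]
  rcases lt_or_ge q i with hq | hq
  · simp [zernikeCoeff_eq_zero_of_lt_right, hq, show q < i + 1 by omega]
  obtain ⟨s, rfl⟩ := Nat.exists_eq_add_of_le hp
  obtain ⟨t, rfl⟩ := Nat.exists_eq_add_of_le hq
  simp only [zernikeCoeff]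
  rw [show i + s + 1 + (i + t + 1) - (i + 1) = i + s + t + 1 by omega,
    show i + s + (i + t) - i = i + s + t by omega,
    show i + s + (i + t + 1) - (i + 1) = i + s + t by omega,
    show i + s + 1 + (i + t) - (i + 1) = i + s + t by omega,
    show i + s + (i + t) - 2 * i = s + t by omega,
    choose_succ_succ', choose_succ_succ']
  push_cast
  have hβ : ((i + s).choose (i + 1) : ℝ) * (i + 1) = (i + s).choose i * s := by
    exact_mod_cast (add_tsub_cancel_left i s) ▸ choose_succ_right_eq (i + s) i
  have hδ :
      ((i + s + t).choose (i + s + 1) : ℝ) * (i + s + 1) = (i + s + t).choose (i + s) * t := by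
    exact_mod_cast (add_tsub_cancel_left (i + s) t) ▸ choose_succ_right_eq (i + s + t) (i + s)
  -- After Pascal's rule the goal is polynomial in these four binomials, tied by `hβ` and `hδ`.
  set α : ℝ := ↑((i + s).choose i)
  set β : ℝ := ↑((i + s).choose (i + 1))
  set γ : ℝ := ↑((i + s + t).choose (i + s))
  set δ : ℝ := ↑((i + s + t).choose (i + s + 1))
  have key : ((α + β) * (γ + δ) + α * γ) * (s + t) =
      (2 * i + s + t + 2) * (β * γ + (α + β) * δ) := by
    refine mul_right_cancel₀ (by positivity : ((i + 1) * (i + s + 1) : ℝ) ≠ 0) ?_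
    linear_combination (s - (i + 1) - (i + s + 1)) * (i + s + 1) * (α * hδ + (γ + δ) * hβ)
  rw [pow_succ]
  linear_combination (-(-1 : ℝ) ^ i) * key

lemma zernikeRadial_eq_sum_range {p q K : ℕ} (hK : min p q < K) (r : ℝ) :
    zernikeRadial p q r = ∑ j ∈ range K, zernikeCoeff p q j * r ^ (p + q - 2 * j) := by
  have hvanish : ∀ j ≥ min p q + 1, zernikeCoeff p q j * r ^ (p + q - 2 * j) = 0 := by
    intro j hj
    rcases min_choice p q with h | h
    · rw [zernikeCoeff_eq_zero_of_lt_left (by omega), zero_mul]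
    · rw [zernikeCoeff_eq_zero_of_lt_right (by omega), zero_mul]
  rw [zernikeRadial, eventually_constant_sum hvanish (n := p + 1) (by omega),
    eventually_constant_sum hvanish (n := K) (by omega)]

lemma hasDerivAt_zernikeRadial (p q : ℕ) (r : ℝ) :
    HasDerivAt (zernikeRadial p q)
      (∑ j ∈ range (p + 1),
        zernikeCoeff p q j * (p + q - 2 * j : ℕ) * r ^ (p + q - 2 * j - 1)) r := by
  unfold zernikeRadial
  simp only [mul_assoc]
  exact HasDerivAt.fun_sum fun j _ => (hasDerivAt_pow _ r).const_mul (zernikeCoeff p q j)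

lemma deriv_zernikeRadial_succ_succ (p q : ℕ) (r : ℝ) :
    deriv (zernikeRadial (p + 1) (q + 1)) r =
      deriv (zernikeRadial p q) r +
        (p + q + 2) * (zernikeRadial p (q + 1) r + zernikeRadial (p + 1) q r) := by
  rw [(hasDerivAt_zernikeRadial _ _ r).deriv, (hasDerivAt_zernikeRadial _ _ r).deriv,
    zernikeRadial_eq_sum_range (K := p + 2) (by omega), zernikeRadial,
    sum_range_succ', sum_range_succ' _ (p + 1), sum_range_succ' _ (p + 1)]
  have hterm : ∀ i ∈ range (p + 1),
      zernikeCoeff (p + 1) (q + 1) (i + 1) * (p + 1 + (q + 1) - 2 * (i + 1) : ℕ) *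
          r ^ (p + 1 + (q + 1) - 2 * (i + 1) - 1) =
        zernikeCoeff p q i * (p + q - 2 * i : ℕ) * r ^ (p + q - 2 * i - 1) +
          (p + q + 2) * (zernikeCoeff p (q + 1) (i + 1) * r ^ (p + (q + 1) - 2 * (i + 1)) +
            zernikeCoeff (p + 1) q (i + 1) * r ^ (p + 1 + q - 2 * (i + 1))) := by
    intro i _
    rw [show p + 1 + (q + 1) - 2 * (i + 1) = p + q - 2 * i by omega,
      show p + (q + 1) - 2 * (i + 1) = p + q - 2 * i - 1 by omega,
      show p + 1 + q - 2 * (i + 1) = p + q - 2 * i - 1 by omega]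
    linear_combination r ^ (p + q - 2 * i - 1) * zernikeCoeff_succ_succ p q i
  have hpascal :
      zernikeCoeff (p + 1) (q + 1) 0 = zernikeCoeff p (q + 1) 0 + zernikeCoeff (p + 1) q 0 := by
    simp only [zernikeCoeff, pow_zero, one_mul, choose_zero_right, cast_one, tsub_zero]
    rw [show p + 1 + (q + 1) = p + q + 1 + 1 by omega, choose_succ_succ', cast_add]
    ring_nf
  rw [sum_congr rfl hterm, sum_add_distrib, ← mul_sum, sum_add_distrib]
  simp only [mul_zero, tsub_zero, hpascal]
  rw [show p + 1 + (q + 1) - 1 = p + (q + 1) by omega, show p + 1 + q = p + (q + 1) by omega]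
  push_cast
  ring

section RadialPoly

variable {m : ℕ} {l : ℤ}

lemma radialPoly_eq_zero_of_lt (h : m < l.natAbs) (r : ℝ) : radialPoly m l r = 0 := by
  rw [radialPoly, if_neg (by omega)]

lemma radialPoly_of_natAbs_eq (h : l.natAbs = m) (r : ℝ) : radialPoly m l r = r ^ m := by
  rw [radialPoly, if_pos ⟨h.le, by simp [h]⟩, radialPolyAux, h, show (m + m) / 2 = m by omega]
  simp [m.factorial_ne_zero]

lemma radialPoly_eq_zernikeRadial {p q : ℕ} (hm : m = p + q) (hl : l = p - q) :
    radialPoly m l = zernikeRadial p q := by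
  funext r
  rcases le_total q p with h | h
  · rw [radialPoly, if_pos ⟨by omega, ⟨q, by omega⟩⟩, radialPolyAux,
      zernikeRadial_eq_sum_range (K := q + 1) (by omega) r,
      show (m - l.natAbs) / 2 = q by omega, show (m + l.natAbs) / 2 = p by omega, hm]
    refine sum_congr rfl fun j hj => ?_
    rw [mem_range] at hj
    rw [zernikeCoeff_eq_factorial (by omega) (by omega)]
  · rw [radialPoly, if_pos ⟨by omega, ⟨p, by omega⟩⟩, radialPolyAux,
      zernikeRadial_eq_sum_range (K := p + 1) (by omega) r,
      show (m - l.natAbs) / 2 = p by omega, show (m + l.natAbs) / 2 = q by omega, hm]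
    refine sum_congr rfl fun j hj => ?_
    rw [mem_range] at hj
    rw [zernikeCoeff_eq_factorial (by omega) (by omega), mul_right_comm _ _ ((q - j)! : ℝ)]

lemma exists_eq_add_eq_sub (hlm : l.natAbs ≤ m) (he : Even (m - l.natAbs)) :
    ∃ p q : ℕ, m = p + q ∧ l = p - q := by
  obtain ⟨k, hk⟩ := he
  rcases le_total 0 l with h | h
  · exact ⟨l.natAbs + k, k, by omega, by omega⟩
  · exact ⟨k, l.natAbs + k, by omega, by omega⟩

lemma deriv_radialPoly_add_two (hlm : l.natAbs ≤ m) (he : Even (m - l.natAbs)) (r : ℝ) :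
    deriv (radialPoly (m + 2) l) r =
      deriv (radialPoly m l) r +
        (m + 2) * (radialPoly (m + 1) (l - 1) r + radialPoly (m + 1) (l + 1) r) := by
  obtain ⟨p, q, rfl, rfl⟩ := exists_eq_add_eq_sub hlm he
  have hR : radialPoly (p + q) (p - q) = zernikeRadial p q := radialPoly_eq_zernikeRadial rfl rfl
  have hR₂ : radialPoly (p + q + 2) (p - q) = zernikeRadial (p + 1) (q + 1) :=
    radialPoly_eq_zernikeRadial (by omega) (by omega)
  have hRsub : radialPoly (p + q + 1) (p - q - 1) = zernikeRadial p (q + 1) :=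
    radialPoly_eq_zernikeRadial (by omega) (by omega)
  have hRadd : radialPoly (p + q + 1) (p - q + 1) = zernikeRadial (p + 1) q :=
    radialPoly_eq_zernikeRadial (by omega) (by omega)
  rw [hR, hR₂, hRsub, hRadd, deriv_zernikeRadial_succ_succ]
  push_cast
  ring

end RadialPoly

/-- Both sums of the expansion over the common range `2 * j ≤ m`: the terms added to either sum
vanish (`mul_radialPoly_eq_zero`), while any further `j` would truncate `m - 1 - 2 * j` to `0`. -/
noncomputable def radialDerivSum (m : ℕ) (l : ℤ) (r : ℝ) : ℝ :=
  ∑ j ∈ range (m / 2 + 1),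
    ((m : ℝ) - 2 * j) *
      (radialPoly (m - 1 - 2 * j) (l - 1) r + radialPoly (m - 1 - 2 * j) (l + 1) r)

lemma mul_radialPoly_eq_zero {m j : ℕ} {l : ℤ} (hj : 2 * j ≤ m)
    (hl : m < 2 * j + 1 + l.natAbs) (r : ℝ) :
    ((m : ℝ) - 2 * j) * radialPoly (m - 1 - 2 * j) l r = 0 := by
  rcases hj.eq_or_lt with h | h
  · rw [← h]
    push_cast
    ring
  · rw [radialPoly_eq_zero_of_lt (by omega), mul_zero]

lemma sum_range_mul_radialPoly (m : ℕ) (l : ℤ) (r : ℝ) :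
    ∑ j ∈ range ((m - 1 - l.natAbs) / 2 + 1),
        ((m : ℝ) - 2 * j) * radialPoly (m - 1 - 2 * j) l r =
      ∑ j ∈ range (m / 2 + 1), ((m : ℝ) - 2 * j) * radialPoly (m - 1 - 2 * j) l r := by
  refine sum_subset (range_subset_range.2 (by omega)) fun j hj hj' => ?_
  rw [mem_range] at hj hj'
  exact mul_radialPoly_eq_zero (by omega) (by omega) r

lemma radialDerivSum_add_two (m : ℕ) (l : ℤ) (r : ℝ) :
    radialDerivSum (m + 2) l r =
      radialDerivSum m l r +
        (m + 2) * (radialPoly (m + 1) (l - 1) r + radialPoly (m + 1) (l + 1) r) := by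
  rw [radialDerivSum, show (m + 2) / 2 + 1 = m / 2 + 1 + 1 by omega, sum_range_succ',
    radialDerivSum]
  congr 1
  · refine sum_congr rfl fun j _ => ?_
    rw [show m + 2 - 1 - 2 * (j + 1) = m - 1 - 2 * j by omega]
    push_cast
    ring
  · simp

lemma radialDerivSum_natAbs_self (l : ℤ) (r : ℝ) :
    radialDerivSum l.natAbs l r = l.natAbs * r ^ (l.natAbs - 1) := by
  rw [radialDerivSum, sum_eq_single 0]
  · rcases lt_trichotomy l 0 with h | rfl | h
    · rw [radialPoly_of_natAbs_eq (l := l + 1) (by omega),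
        radialPoly_eq_zero_of_lt (l := l - 1) (by omega)]
      simp
    · simp
    · rw [radialPoly_of_natAbs_eq (l := l - 1) (by omega),
        radialPoly_eq_zero_of_lt (l := l + 1) (by omega)]
      simp
  · intro j hj hj0
    rw [mem_range] at hj
    rw [mul_add, mul_radialPoly_eq_zero (by omega) (by omega),
      mul_radialPoly_eq_zero (by omega) (by omega), add_zero]
  · simp

lemma deriv_radialPoly_natAbs_add_two_mul (l : ℤ) (q : ℕ) (r : ℝ) :
    deriv (radialPoly (l.natAbs + 2 * q) l) r = radialDerivSum (l.natAbs + 2 * q) l r := by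
  induction q with
  | zero =>
    rw [mul_zero, add_zero, radialDerivSum_natAbs_self,
      show radialPoly l.natAbs l = fun r => r ^ l.natAbs from funext (radialPoly_of_natAbs_eq rfl)]
    simp
  | succ q ih =>
    rw [mul_add_one, ← add_assoc, deriv_radialPoly_add_two (by omega) ⟨q, by omega⟩, ih,
      radialDerivSum_add_two]

theorem radialPoly_deriv_expansion_general (m : ℕ) (l : ℤ)
    (hlm : l.natAbs ≤ m) (he : Even (m - l.natAbs)) (r : ℝ) :
    deriv (radialPoly m l) r =
      (∑ j ∈ Finset.range ((m - 1 - (l - 1).natAbs) / 2 + 1),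
          ((m : ℝ) - 2 * j) * radialPoly (m - 1 - 2 * j) (l - 1) r) +
        ∑ j ∈ Finset.range ((m - 1 - (l + 1).natAbs) / 2 + 1),
          ((m : ℝ) - 2 * j) * radialPoly (m - 1 - 2 * j) (l + 1) r := by
  obtain ⟨q, rfl⟩ : ∃ q, m = l.natAbs + 2 * q := by
    obtain ⟨k, hk⟩ := he
    exact ⟨k, by omega⟩
  rw [sum_range_mul_radialPoly, sum_range_mul_radialPoly, ← sum_add_distrib,
    deriv_radialPoly_natAbs_add_two_mul, radialDerivSum]
  simp only [mul_add]

/-- Derivative expansion of the radial polynomials. -/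
theorem radialPoly_deriv_expansion (m : ℕ) (l : ℤ) (hm : 1 ≤ m)
    (hlm : l.natAbs ≤ m) (he : Even (m - l.natAbs)) (r : ℝ) :
    deriv (radialPoly m l) r =
      (∑ j ∈ Finset.range ((m - 1 - (l - 1).natAbs) / 2 + 1),
          ((m : ℝ) - 2 * j) * radialPoly (m - 1 - 2 * j) (l - 1) r) +
        ∑ j ∈ Finset.range ((m - 1 - (l + 1).natAbs) / 2 + 1),
          ((m : ℝ) - 2 * j) * radialPoly (m - 1 - 2 * j) (l + 1) r :=
  radialPoly_deriv_expansion_general m l hlm he r
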